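/- The vertices of Newton(M_α(x1,...,xn)) are exactly the vectors γ ∈ Z_{≥0}^n whose sequence of nonzero entries (read left to right) equals α. -/

import Mathlib

open MvPolynomial Finset
open scoped Classical

/-- The Newton polytope of a multivariate polynomial. -/
noncomputable def Newton {n : ℕ} {R : Type*} [CommSemiring R]
    (f : MvPolynomial (Fin n) R) : Set (Fin n → ℝ) :=
  convexHull ℝ ((fun d : Fin n →₀ ℕ => fun i => (d i : ℝ)) '' ↑f.support)

/-- The monomial quasisymmetric polynomial `M_α` in `n` variables. -/
noncomputable def Mq {n k : ℕ} (α : Fin k → ℕ) : MvPolynomial (Fin n) ℝ :=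
  ∑ ι ∈ Finset.univ.filter (fun ι : Fin k → Fin n => StrictMono ι),
    monomial (Finsupp.equivFunOnFinite.symm
      (fun j => ∑ i ∈ Finset.univ.filter (fun i => ι i = j), α i)) 1

/-!
The exponent vectors of `M_α` are the vectors `extend ι α 0` spreading the entries of `α`, in
order, over positions `ι 0 < ⋯ < ι (k-1)`; equivalently, the vectors whose nonzero entries read
left to right are `α`. All of them have the same Euclidean norm, and points of
a sphere in a strictly convex space are extreme points of their convex hull.
-/

open Function

open Set Metric in
theorem subset_extremePoints_convexHull_of_subset_sphere {E : Type*} [NormedAddCommGroup E]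
    [NormedSpace ℝ E] [StrictConvexSpace ℝ E] {s : Set E} {z : E} {r : ℝ}
    (hs : s ⊆ sphere z r) : s ⊆ extremePoints ℝ (convexHull ℝ s) := by
  intro x hx
  have hball : convexHull ℝ s ⊆ closedBall z r :=
    convexHull_min (hs.trans sphere_subset_closedBall) (convex_closedBall z r)
  refine ⟨subset_convexHull ℝ s hx, fun x₁ h₁ x₂ h₂ hx₁₂ => ?_⟩
  obtain rfl | hne := eq_or_ne x₁ x₂
  · rw [openSegment_same] at hx₁₂
    exact hx₁₂.symm
  · have := openSegment_subset_ball_of_ne (hball h₁) (hball h₂) hne hx₁₂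
    exact absurd (mem_sphere.mp (hs hx)) (mem_ball.mp this).ne

theorem extremePoints_convexHull_eq_of_sum_sq_eq {ι : Type*} [Fintype ι] {s : Set (ι → ℝ)}
    {c : ℝ} (hs : ∀ x ∈ s, ∑ i, x i ^ 2 = c) : Set.extremePoints ℝ (convexHull ℝ s) = s := by
  refine extremePoints_convexHull_subset.antisymm fun x hx => ?_
  let e := (WithLp.linearEquiv 2 ℝ (ι → ℝ)).symm
  have hsphere : e '' s ⊆ Metric.sphere 0 √c := by
    rintro _ ⟨y, hy, rfl⟩
    simp [e, EuclideanSpace.norm_eq, hs y hy]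
  have := subset_extremePoints_convexHull_of_subset_sphere hsphere (Set.mem_image_of_mem e hx)
  have himage := e.toLinearMap.image_convexHull s
  rw [LinearEquiv.coe_toLinearMap] at himage
  rwa [← himage, ← image_extremePoints, e.injective.mem_set_image] at this

theorem Function.Injective.sum_filter_eq_extend {α β M : Type*} [Fintype α] [DecidableEq β]
    [AddCommMonoid M] {ι : α → β} (hι : Injective ι) (f : α → M) (j : β) :
    ∑ i ∈ univ.filter (fun i => ι i = j), f i = extend ι f 0 j := by
  by_cases h : ∃ t, ι t = j
  · obtain ⟨t, rfl⟩ := h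
    rw [hι.extend_apply, Finset.sum_eq_single_of_mem t (by simp)]
    intro i hi hit
    exact absurd (hι (Finset.mem_filter.mp hi).2) hit
  · rw [extend_apply' _ _ _ h, Pi.zero_apply]
    exact Finset.sum_eq_zero fun i hi => absurd ⟨i, (Finset.mem_filter.mp hi).2⟩ h

theorem Function.Injective.sum_comp_extend {α β M N : Type*} [Fintype α] [Fintype β] [Zero M]
    [AddCommMonoid N] {ι : α → β} (hι : Injective ι) (f : α → M) (g : M → N) (hg : g 0 = 0) :
    ∑ j, g (extend ι f 0 j) = ∑ t, g (f t) :=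
  (Fintype.sum_of_injective ι hι _ _ (fun j hj => by simp [extend_apply' _ _ _ hj, hg])
    fun t => by simp [hι.extend_apply]).symm

theorem List.filter_ofFn_eq_ofFn_comp {M : Type*} {m n : ℕ} (γ : Fin n → M) (p : M → Bool)
    {ι : Fin m → Fin n} (hι : StrictMono ι) (hrange : ∀ j, p (γ j) ↔ j ∈ Set.range ι) :
    (List.ofFn γ).filter p = List.ofFn (γ ∘ ι) := by
  have : (List.finRange n).filter (p ∘ γ) = List.ofFn ι := by
    refine List.Pairwise.eq_of_mem_iff (r := (· < ·)) ((List.pairwise_lt_finRange n).filter _)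
      (List.pairwise_ofFn.mpr fun _ _ h => hι h) fun j => ?_
    simp [hrange]
  rw [List.ofFn_eq_map, List.filter_map, this, List.map_ofFn]

theorem List.filter_ofFn_ne_zero_eq_ofFn_iff {M : Type*} [Zero M] [DecidableEq M] {n k : ℕ}
    {α : Fin k → M} (hα : ∀ t, α t ≠ 0) (γ : Fin n → M) :
    (List.ofFn γ).filter (fun a => a ≠ 0) = List.ofFn α ↔
      ∃ ι : Fin k → Fin n, StrictMono ι ∧ extend ι α 0 = γ := by
  constructor
  · intro h
    set s := univ.filter fun j => γ j ≠ 0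
    have hfilter := List.filter_ofFn_eq_ofFn_comp γ (fun a => a ≠ 0)
      (s.orderEmbOfFin rfl).strictMono fun j => by simp [s]
    obtain rfl : s.card = k := by simpa using congrArg List.length (hfilter.symm.trans h)
    have hcomp : γ ∘ s.orderEmbOfFin rfl = α := List.ofFn_injective (hfilter.symm.trans h)
    refine ⟨s.orderEmbOfFin rfl, (s.orderEmbOfFin rfl).strictMono, funext fun j => ?_⟩
    by_cases hj : ∃ t, s.orderEmbOfFin rfl t = j
    · obtain ⟨t, rfl⟩ := hj
      rw [(s.orderEmbOfFin rfl).injective.extend_apply, ← hcomp, comp_apply]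
    · have hjs : j ∉ s := by
        rwa [← Finset.mem_coe, ← s.range_orderEmbOfFin rfl]
      rw [extend_apply' _ _ _ hj, Pi.zero_apply, eq_comm]
      simpa [s] using hjs
  · rintro ⟨ι, hι, rfl⟩
    rw [List.filter_ofFn_eq_ofFn_comp _ _ hι, extend_comp hι.injective]
    intro j
    by_cases hj : ∃ t, ι t = j
    · obtain ⟨t, rfl⟩ := hj
      simp [hι.injective.extend_apply, hα t]
    · simp [hj]

theorem mem_support_Mq_iff {n k : ℕ} (α : Fin k → ℕ) (γ : Fin n → ℕ) :
    Finsupp.equivFunOnFinite.symm γ ∈ (Mq α : MvPolynomial (Fin n) ℝ).support ↔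
      ∃ ι : Fin k → Fin n, StrictMono ι ∧ Function.extend ι α 0 = γ := by
  simp only [Mq, mem_support_iff, coeff_sum, coeff_monomial, Finset.sum_boole,
    Nat.cast_ne_zero, ← Nat.pos_iff_ne_zero, Finset.card_pos, Finset.Nonempty, Finset.mem_filter,
    Finset.mem_univ, true_and, Equiv.apply_eq_iff_eq]
  refine exists_congr fun ι => and_congr_right fun hι => ?_
  simp only [hι.injective.sum_filter_eq_extend]

theorem Newton_Mq {n k : ℕ} {α : Fin k → ℕ} (hα : ∀ t, α t ≠ 0) :
    Newton (Mq α : MvPolynomial (Fin n) ℝ) = convexHull ℝ {x | ∃ γ : Fin n → ℕ,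
      (List.ofFn γ).filter (fun a => a ≠ 0) = List.ofFn α ∧ x = fun i => (γ i : ℝ)} := by
  rw [Newton]
  congr 1
  ext x
  simp only [Set.mem_image, Finset.mem_coe, Set.mem_ofPred_eq,
    List.filter_ofFn_ne_zero_eq_ofFn_iff hα, ← mem_support_Mq_iff,
    Finsupp.equivFunOnFinite.symm.surjective.exists]
  exact exists_congr fun γ => and_congr_right fun _ => by
    rw [Finsupp.coe_equivFunOnFinite_symm, eq_comm]

theorem stmt17_general {n k : ℕ} (α : Fin k → ℕ) (hpos : ∀ t, 0 < α t) :
    Set.extremePoints ℝ (Newton (Mq α : MvPolynomial (Fin n) ℝ)) =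
      {x | ∃ γ : Fin n → ℕ,
        (List.ofFn γ).filter (fun a => a ≠ 0) = List.ofFn α ∧
        x = fun i => (γ i : ℝ)} := by
  have hα : ∀ t, α t ≠ 0 := fun t => (hpos t).ne'
  rw [Newton_Mq hα]
  refine extremePoints_convexHull_eq_of_sum_sq_eq (c := ∑ t, (α t : ℝ) ^ 2) ?_
  rintro _ ⟨γ, hγ, rfl⟩
  obtain ⟨ι, hι, rfl⟩ := (List.filter_ofFn_ne_zero_eq_ofFn_iff hα γ).mp hγ
  exact hι.injective.sum_comp_extend α (fun a : ℕ => (a : ℝ) ^ 2) (by simp)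

/-- The vertices of `Newton(M_α(x1,...,xn))` are exactly the `γ ∈ Z_{≥0}^n`
whose sequence of nonzero entries equals `α`. -/
theorem stmt17 {n k : ℕ} (hk : k ≤ n) (α : Fin k → ℕ) (hpos : ∀ t, 0 < α t) :
    Set.extremePoints ℝ (Newton (Mq α : MvPolynomial (Fin n) ℝ)) =
      {x | ∃ γ : Fin n → ℕ,
        (List.ofFn γ).filter (fun a => a ≠ 0) = List.ofFn α ∧
        x = fun i => (γ i : ℝ)} :=
  stmt17_general α hpos
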